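/- Let C be a Γ-conformal Lie algebra (as above) and define the bracket on C ⊗ ℂ[t,t⁻¹] by [u⊗tᵐ, v⊗tⁿ] = Σ_{i≥0} C(m,i) (u_i v) ⊗ t^{m+n−i} (the loop bracket of the conformal algebra, a finite sum since u_i v = 0 for large i). Then the Γ-action g·(u⊗tᵐ) = φ(g)^{m+1}(R_g u ⊗ tᵐ) satisfies [g·(u⊗tᵐ), g·(v⊗tⁿ)] = g·[u⊗tᵐ, v⊗tⁿ] for all g ∈ Γ, u, v ∈ C, m, n ∈ ℤ, where C(m,i) denotes binomial coefficients (with m ∈ ℤ). -/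
import Mathlib


open scoped BigOperators

/-- The generalized binomial coefficient `C(m,i) = m(m−1)⋯(m−i+1)/i!` for `m : ℤ`. -/
noncomputable def zchoose (m : ℤ) (i : ℕ) : ℂ :=
  (∏ j ∈ Finset.range i, ((m : ℂ) - (j : ℂ))) / (i.factorial : ℂ)

/-- The twisted action of `g ∈ Γ` on `C ⊗ ℂ[t,t⁻¹]` (modelled as `ℤ →₀ C`):
`g·(u ⊗ tᵐ) = φ(g)^{m+1} (R_g u ⊗ tᵐ)`. -/
noncomputable def cAct {C : Type*} [AddCommGroup C] [Module ℂ C]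
    {Γ : Type*} [Group Γ] (R : Γ → C →ₗ[ℂ] C) (φ : Γ →* ℂˣ)
    (g : Γ) (f : ℤ →₀ C) : ℤ →₀ C :=
  f.sum fun m v => Finsupp.single m (((φ g ^ (m + 1) : ℂˣ) : ℂ) • R g v)

/-- The loop bracket of a conformal Lie algebra on single tensors:
`[u⊗tᵐ, v⊗tⁿ] = Σ_{i≥0} C(m,i) (u_i v) ⊗ t^{m+n−i}`. -/
noncomputable def cBr {C : Type*} [AddCommGroup C] [Module ℂ C]
    (op : ℕ → C →ₗ[ℂ] C →ₗ[ℂ] C) (m n : ℤ) (u v : C) : ℤ →₀ C :=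
  ∑ᶠ i : ℕ, Finsupp.single (m + n - (i : ℤ)) (zchoose m i • op i u v)

lemma cAct_single {C : Type*} [AddCommGroup C] [Module ℂ C]
    {Γ : Type*} [Group Γ] (R : Γ → C →ₗ[ℂ] C) (φ : Γ →* ℂˣ)
    (g : Γ) (k : ℤ) (w : C) :
    cAct R φ g (Finsupp.single k w)
      = Finsupp.single k (((φ g ^ (k + 1) : ℂˣ) : ℂ) • R g w) := by
  unfold cAct
  rw [Finsupp.sum_single_index]
  simp

lemma cAct_sum {C : Type*} [AddCommGroup C] [Module ℂ C]
    {Γ : Type*} [Group Γ] (R : Γ → C →ₗ[ℂ] C) (φ : Γ →* ℂˣ)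
    (g : Γ) {ι : Type*} (s : Finset ι) (F : ι → ℤ →₀ C) :
    cAct R φ g (∑ i ∈ s, F i) = ∑ i ∈ s, cAct R φ g (F i) := by
  unfold cAct
  exact (Finsupp.sum_finset_sum_index (by intro k; simp)
    (by intro k a b; simp [smul_add, Finsupp.single_add])).symm

/-- for a Γ-conformal Lie algebra, the twisted action of `Γ` on the loop
algebra preserves the loop bracket: `[g·(u⊗tᵐ), g·(v⊗tⁿ)] = g·[u⊗tᵐ, v⊗tⁿ]`. -/
theorem gamma_conformal_action_preserves_loop_bracket
    {C : Type*} [AddCommGroup C] [Module ℂ C]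
    {Γ : Type*} [Group Γ] (R : Γ → C →ₗ[ℂ] C) (φ : Γ →* ℂˣ)
    (op : ℕ → C →ₗ[ℂ] C →ₗ[ℂ] C)
    (hRone : R 1 = LinearMap.id)
    (hRmul : ∀ g h : Γ, R (g * h) = (R g).comp (R h))
    (htrunc : ∀ u v : C, ∃ N : ℕ, ∀ i ≥ N, op i u v = 0)
    (hconf : ∀ (g : Γ) (i : ℕ) (u v : C),
        R g (op i u v) = ((φ g ^ ((i : ℤ) + 1) : ℂˣ) : ℂ) • op i (R g u) (R g v)) :
    ∀ (g : Γ) (u v : C) (m n : ℤ),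
      cBr op m n (((φ g ^ (m + 1) : ℂˣ) : ℂ) • R g u)
          (((φ g ^ (n + 1) : ℂˣ) : ℂ) • R g v)
        = cAct R φ g (cBr op m n u v) := by
  intro g u v m n
  obtain ⟨N, hN⟩ := htrunc u v
  have hN' : ∀ i ≥ N, op i (R g u) (R g v) = 0 := by
    intro i hi
    have h := hconf g i u v
    rw [hN i hi, map_zero] at h
    exact (smul_eq_zero.mp h.symm).resolve_left (Units.ne_zero _)
  unfold cBr
  rw [finsum_eq_sum_of_support_subset _ (s := Finset.range N)
      (by
        intro i hi
        simp only [Function.mem_support, Finset.coe_range, Set.mem_Iio, Finset.mem_range]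
        by_contra hc
        push_neg at hc
        exact hi (by simp [hN' i hc])),
    finsum_eq_sum_of_support_subset _ (s := Finset.range N)
      (by
        intro i hi
        simp only [Function.mem_support, Finset.coe_range, Set.mem_Iio, Finset.mem_range]
        by_contra hc
        push_neg at hc
        exact hi (by simp [hN i hc])),
    cAct_sum]
  refine Finset.sum_congr rfl fun i _ => ?_
  rw [cAct_single]
  congr 1
  simp only [map_smul, LinearMap.smul_apply, smul_smul]
  rw [hconf g i u v, smul_smul]
  congr 1
  have key : (φ g ^ (m + n - (i : ℤ) + 1)) * (φ g ^ ((i : ℤ) + 1))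
      = (φ g ^ (m + 1)) * (φ g ^ (n + 1)) := by
    rw [← zpow_add, ← zpow_add]; ring_nf
  have key' : ((φ g ^ (m + n - (i : ℤ) + 1) : ℂˣ) : ℂ) * ((φ g ^ ((i : ℤ) + 1) : ℂˣ) : ℂ)
      = ((φ g ^ (m + 1) : ℂˣ) : ℂ) * ((φ g ^ (n + 1) : ℂˣ) : ℂ) := by
    rw [← Units.val_mul, ← Units.val_mul, key]
  linear_combination (-(zchoose m i)) * key'
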